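/- Let γ be a prime, L ≥ 1 an integer, and Q an invertible L×L matrix over the prime field F_γ. Then for any given permutations π_c and π_s of {1,…,L} there exist permutations π_d and π_e of {1,…,L} such that: for every j ∈ {1,…,L}, the j×j submatrix Q^{⟨j⟩} of Q with rows indexed by {l : π_c(l) ≤ j} and columns indexed by {m : π_d(m) ≤ j} is invertible over F_γ, and for every i ∈ {1,…,L}, the (L−i+1)×(L−i+1) submatrix Q^{(i)} of Q with rows indexed by {l : π_s(l) ≥ i} and columns indexed by {m : π_e(m) ≥ i} is invertible over F_γ. (Theorem 2 of the paper.) -/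

import Mathlib

open Matrix Function Submodule

lemma srmq_step {K : Type*} [Field K] {n j : ℕ} (hj : j + 1 ≤ n)
    (Q : Matrix (Fin n) (Fin n) K) (hQ : IsUnit Q.det)
    (r : Fin n → Fin n) (hr : Function.Injective r)
    (g : Fin j → Fin n) (hg : Function.Injective g)
    (hdet : IsUnit (Q.submatrix
      (fun k : Fin j => r (Fin.castLE (Nat.le_of_succ_le hj) k)) g).det) :
    ∃ c : Fin n, c ∉ Set.range g ∧
      IsUnit (Q.submatrix (fun k : Fin (j+1) => r (Fin.castLE hj k))
        (Fin.snoc g c)).det := by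
  classical
  set N : Matrix (Fin (j+1)) (Fin n) K :=
    Q.submatrix (fun k => r (Fin.castLE hj k)) id with hN
  set colsG : Fin j → (Fin (j+1) → K) := fun i => Nᵀ (g i) with hcolsG
  set W : Submodule K (Fin (j+1) → K) := Submodule.span K (Set.range colsG) with hW
  -- rows of N are linearly independent
  have hQrows : LinearIndependent K (fun i => Q i) :=
    Matrix.linearIndependent_rows_iff_isUnit.mpr ((Matrix.isUnit_iff_isUnit_det Q).mpr hQ)
  have hNrows : LinearIndependent K (fun i => N i) := by
    have : (fun i : Fin (j+1) => N i) =
        (fun i => Q i) ∘ (fun i : Fin (j+1) => r (Fin.castLE hj i)) := rfl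
    rw [this]
    exact hQrows.comp _ (hr.comp (Fin.castLE_injective hj))
  -- there exists a column of N not in W
  have hexc : ∃ c : Fin n, Nᵀ c ∉ W := by
    by_contra hall
    push_neg at hall
    have hle : Submodule.span K (Set.range Nᵀ) ≤ W :=
      Submodule.span_le.mpr (by rintro x ⟨c, rfl⟩; exact hall c)
    have h1 : N.rank = j + 1 := by
      have h2 : Nᵀ.rank = j + 1 := by
        rw [Matrix.rank_eq_finrank_span_cols]
        show Module.finrank K (Submodule.span K (Set.range Nᵀᵀ)) = j + 1
        rw [Matrix.transpose_transpose]
        rw [finrank_span_eq_card hNrows, Fintype.card_fin]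
      rw [← Matrix.rank_transpose, h2]
    have h3 : N.rank ≤ j := by
      rw [Matrix.rank_eq_finrank_span_cols]
      calc Module.finrank K (Submodule.span K (Set.range Nᵀ))
          ≤ Module.finrank K W := Submodule.finrank_mono hle
        _ ≤ j := by
            have := finrank_range_le_card (R := K) colsG
            rw [Fintype.card_fin] at this
            exact this
    omega
  obtain ⟨c, hc⟩ := hexc
  -- colsG is linearly independent
  have hgind : LinearIndependent K colsG := by
    have hMind : LinearIndependent K
        (fun i => (Q.submatrix (fun k : Fin j => r (Fin.castLE (Nat.le_of_succ_le hj) k)) g)ᵀ i) :=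
      Matrix.linearIndependent_cols_iff_isUnit.mpr ((Matrix.isUnit_iff_isUnit_det _).mpr hdet)
    have hcomp : (LinearMap.funLeft K K (Fin.castSucc : Fin j → Fin (j+1))) ∘ colsG =
        (fun i => (Q.submatrix (fun k : Fin j => r (Fin.castLE (Nat.le_of_succ_le hj) k)) g)ᵀ i) := by
      funext i
      funext l
      rfl
    exact LinearIndependent.of_comp (LinearMap.funLeft K K Fin.castSucc) (hcomp ▸ hMind)
  refine ⟨c, ?_, ?_⟩
  · rintro ⟨i, rfl⟩
    exact hc (Submodule.subset_span ⟨i, rfl⟩)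
  · have hsnoc : LinearIndependent K (Fin.snoc colsG (Nᵀ c) : Fin (j+1) → Fin (j+1) → K) :=
      linearIndependent_fin_snoc.mpr ⟨hgind, hc⟩
    have hcols : (fun i => (Q.submatrix (fun k : Fin (j+1) => r (Fin.castLE hj k))
        (Fin.snoc g c))ᵀ i) = (Fin.snoc colsG (Nᵀ c) : Fin (j+1) → Fin (j+1) → K) := by
      have : (fun i => (Q.submatrix (fun k : Fin (j+1) => r (Fin.castLE hj k))
          (Fin.snoc g c))ᵀ i) = Nᵀ ∘ (Fin.snoc g c) := rfl
      rw [this]; exact Fin.comp_snoc (fun x : Fin n => Nᵀ x) g c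
    exact (Matrix.isUnit_iff_isUnit_det _).mp
      (Matrix.linearIndependent_cols_iff_isUnit.mp (by have h := hcols ▸ hsnoc; exact h))

lemma srmq_chain {K : Type*} [Field K] {n : ℕ}
    (Q : Matrix (Fin n) (Fin n) K) (hQ : IsUnit Q.det)
    (r : Fin n → Fin n) (hr : Function.Injective r) :
    ∀ (j : ℕ) (hj : j ≤ n), ∃ g : Fin j → Fin n, Function.Injective g ∧
      ∀ (k : ℕ) (hk : k ≤ j),
        IsUnit (Q.submatrix (fun i : Fin k => r (Fin.castLE (hk.trans hj) i))
          (fun i : Fin k => g (Fin.castLE hk i))).det := by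
  intro j
  induction j with
  | zero =>
    intro hj
    refine ⟨Fin.elim0, fun i => i.elim0, ?_⟩
    intro k hk
    interval_cases k
    simp [Matrix.det_fin_zero]
  | succ j ih =>
    intro hj
    obtain ⟨g, hg, hdet⟩ := ih (Nat.le_of_succ_le hj)
    obtain ⟨c, hcr, hcd⟩ := srmq_step hj Q hQ r hr g hg (by
      have := hdet j le_rfl
      exact this)
    refine ⟨Fin.snoc g c, ?_, ?_⟩
    · intro a b hab
      rcases Fin.eq_castSucc_or_eq_last a with ⟨a', rfl⟩ | rfl <;>
        rcases Fin.eq_castSucc_or_eq_last b with ⟨b', rfl⟩ | rfl <;>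
        simp only [Fin.snoc_castSucc, Fin.snoc_last] at hab
      · exact congrArg Fin.castSucc (hg hab)
      · exact absurd hab (fun h => hcr ⟨a', h⟩)
      · exact absurd hab (fun h => hcr ⟨b', h.symm⟩)
      · rfl
    · intro k hk
      rcases eq_or_lt_of_le hk with rfl | hk'
      · exact hcd
      · have hk2 : k ≤ j := by omega
        have heq : (fun i : Fin k => (Fin.snoc g c : Fin (j+1) → Fin n) (Fin.castLE hk i)) =
            fun i : Fin k => g (Fin.castLE hk2 i) := by
          funext i
          have h2 : Fin.castLE hk i = Fin.castSucc (Fin.castLE hk2 i) := rfl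
          rw [h2, Fin.snoc_castSucc]
        rw [heq]
        have := hdet k hk2
        convert this using 2

/-- Theorem 2: Given a prime `γ`, an invertible `L × L` matrix `Q` over
`F_γ = ZMod γ` and permutations `π_c`, `π_s` of `{1,…,L}`, there exist
permutations `π_d`, `π_e` such that all residual coefficient matrices
`Q^{⟨j⟩}` (rows `{l : π_c l ≤ j}`, columns `{m : π_d m ≤ j}`) and
`Q^{(i)}` (rows `{l : π_s l ≥ i}`, columns `{m : π_e m ≥ i}`) are invertible. -/
theorem srmq_permutations_exist (γ L : ℕ) (hγ : Nat.Prime γ) (hL : 1 ≤ L)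
    (Q : Matrix (Fin L) (Fin L) (ZMod γ)) (hQ : IsUnit Q.det)
    (πc πs : Equiv.Perm (Fin L)) :
    ∃ (πd πe : Equiv.Perm (Fin L)),
      (∀ (j : ℕ) (hj1 : 1 ≤ j) (hjL : j ≤ L),
        IsUnit (Matrix.det (Q.submatrix
          (fun i : Fin j => πc.symm (Fin.castLE hjL i))
          (fun k : Fin j => πd.symm (Fin.castLE hjL k))))) ∧
      (∀ (i : ℕ) (hi1 : 1 ≤ i) (hiL : i ≤ L),
        IsUnit (Matrix.det (Q.submatrix
          (fun k : Fin (L - i + 1) =>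
            πs.symm ⟨i - 1 + (k : ℕ), by have := k.isLt; omega⟩)
          (fun k : Fin (L - i + 1) =>
            πe.symm ⟨i - 1 + (k : ℕ), by have := k.isLt; omega⟩)))) := by
  haveI : Fact (Nat.Prime γ) := ⟨hγ⟩
  obtain ⟨g, hg, hdet⟩ :=
    srmq_chain Q hQ (fun l => πc.symm l) πc.symm.injective L le_rfl
  obtain ⟨g', hg', hdet'⟩ :=
    srmq_chain Q hQ (fun l => πs.symm l.rev)
      (πs.symm.injective.comp Fin.rev_injective) L le_rfl
  have hbg : Function.Bijective g := Finite.injective_iff_bijective.mp hg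
  have hbg' : Function.Bijective g' := Finite.injective_iff_bijective.mp hg'
  refine ⟨(Equiv.ofBijective g hbg).symm,
    (Fin.revPerm.trans (Equiv.ofBijective g' hbg')).symm, ?_, ?_⟩
  · intro j hj1 hjL
    exact hdet j hjL
  · intro i hi1 hiL
    have hjL : L - i + 1 ≤ L := by omega
    have key := hdet' (L - i + 1) hjL
    rw [← Matrix.det_submatrix_equiv_self (Fin.revPerm) _] at key
    convert key using 2
    case e'_5 => rfl
    funext k l
    show Q _ _ = Q _ _
    have hk := k.isLt
    have hl := l.isLt
    congr 1
    · refine congrArg (⇑πs.symm) ?_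
      apply Fin.ext
      simp only [Fin.revPerm_apply, Fin.val_rev, Fin.coe_castLE, Matrix.submatrix_apply]
      omega
    · show (Equiv.ofBijective g' hbg') _ = g' _
      show g' _ = g' _
      congr 1
      apply Fin.ext
      simp only [Fin.revPerm_apply, Fin.val_rev, Fin.coe_castLE]
      omega
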